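/- For N = 2k+1 odd with k ≥ 1, tr(S^{k+1} - t·S^k) = ((1+√(1+4t))/2)^N + ((1-√(1+4t))/2)^N, where S = [[1,1,0],[t,t,1],[t,t,t]]; equivalently tr(S^{k+1}) - t·tr(S^k) = x^N + y^N where x, y are the roots of z² - z - t. -/

import Mathlib

open Polynomial

/-! Cayley–Hamilton gives `S³ = (2t + 1) S² - t² S`, so the eigenvalues of `S` are `0` and the
roots of `z² - (2t + 1) z + t²`, which are `x²` and `y²` because `x² + y² = 1 + 2t` and
`x² y² = t²`. Hence `tr Sⁿ = x²ⁿ + y²ⁿ` for `n ≥ 1`, and then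
`tr Sᵏ⁺¹ - t tr Sᵏ = x²ᵏ⁺² + y²ᵏ⁺² + x y (x²ᵏ + y²ᵏ) = (x + y)(x²ᵏ⁺¹ + y²ᵏ⁺¹)`. -/

noncomputable def Smat : Matrix (Fin 3) (Fin 3) (Polynomial ℤ) :=
  !![1, 1, 0; X, X, 1; X, X, X]

lemma Smat_pow_three : Smat ^ 3 = (2 * X + 1 : ℤ[X]) • Smat ^ 2 - (X ^ 2 : ℤ[X]) • Smat := by
  refine Matrix.ext fun i j => ?_
  fin_cases i <;> fin_cases j <;>
    · simp [Smat, pow_succ, Matrix.mul_apply, Fin.sum_univ_three]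
      ring

lemma trace_Smat_pow_add_three (n : ℕ) :
    (Smat ^ (n + 3)).trace =
      (2 * X + 1) * (Smat ^ (n + 2)).trace - X ^ 2 * (Smat ^ (n + 1)).trace := by
  rw [pow_add, Smat_pow_three, Matrix.mul_sub, Matrix.mul_smul, Matrix.mul_smul, ← pow_add,
    ← pow_succ, Matrix.trace_sub, Matrix.trace_smul, Matrix.trace_smul, smul_eq_mul, smul_eq_mul]

lemma trace_Smat : Smat.trace = 1 + 2 * X := by
  simp [Smat, Matrix.trace_fin_three]
  ring

lemma trace_Smat_sq : (Smat ^ 2).trace = 1 + 4 * X + 2 * X ^ 2 := by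
  simp [Smat, pow_two, Matrix.trace_fin_three]
  ring

lemma aeval_trace_Smat_pow_succ {R : Type*} [CommRing R] {x y : R} (hsum : x + y = 1) (n : ℕ) :
    aeval (-(x * y)) (Smat ^ (n + 1)).trace = x ^ (2 * (n + 1)) + y ^ (2 * (n + 1)) := by
  have hy : y = 1 - x := by rw [← hsum]; ring
  subst hy
  induction n using Nat.twoStepInduction with
  | zero =>
    simp only [zero_add, pow_one, trace_Smat, map_add, map_mul, map_one, map_ofNat, aeval_X]
    ring
  | one =>
    simp only [Nat.reduceAdd, trace_Smat_sq, map_add, map_mul, map_pow, map_one, map_ofNat, aeval_X]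
    ring
  | more n ih₀ ih₁ =>
    rw [trace_Smat_pow_add_three, map_sub, map_mul, map_mul, ih₀, ih₁]
    simp only [map_add, map_mul, map_pow, map_one, map_ofNat, aeval_X]
    ring

/-- tr(S^{k+1}) - t·tr(S^k) = x^N + y^N (N = 2k+1) whenever x, y are the roots of
z² - z - t, i.e. x + y = 1 and x·y = -t. -/
theorem trace_eq_root_powers (k : ℕ) (hk : 1 ≤ k)
    (R : Type*) [CommRing R] (x y : R) (hsum : x + y = 1) :
    Polynomial.aeval (-(x * y))
        (Matrix.trace (Smat ^ (k + 1)) - X * Matrix.trace (Smat ^ k))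
      = x ^ (2 * k + 1) + y ^ (2 * k + 1) := by
  obtain ⟨m, rfl⟩ : ∃ m, k = m + 1 := ⟨k - 1, by omega⟩
  rw [map_sub, map_mul, aeval_X, aeval_trace_Smat_pow_succ hsum,
    aeval_trace_Smat_pow_succ hsum]
  linear_combination (x ^ (2 * (m + 1) + 1) + y ^ (2 * (m + 1) + 1)) * hsum
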